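/- Geometric ring decomposition dominates cluster sampling: let S be a finite set with a center c, and partition S into rings S_{c,ℓ}, ..., S_{c,1} where S_{c,ℓ} contains the single farthest point from c, S_{c,j} contains the next farthest 2^{ℓ-j} points for 1 < j < ℓ, and S_{c,1} the rest (with ℓ = ⌊log₂|S|⌋). If x belongs to S_{c,j} then the uniform probability 1/|S_{c,j}| within its ring satisfies 1/|S_{c,j}| ≥ d(x,C)^z / ∑_{y∈X} d(y,C)^z, where C is a set of centers with c ∈ C, S is the cluster of c, and d(y,C)^z of every point in a ring with larger index is at least d(x,C)^z. -/
import Mathlib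


/-- distance of a point to a finite set of centers -/
noncomputable def dSet {X : Type*} [MetricSpace X] (x : X) (C : Finset X) : ℝ :=
  sInf ((fun c => dist x c) '' (C : Set X))

lemma dSet_nonneg {X : Type*} [MetricSpace X] (x : X) (C : Finset X) : 0 ≤ dSet x C := by
  apply Real.sInf_nonneg
  rintro r ⟨y, -, rfl⟩
  exact dist_nonneg

/-- Geometric ring decomposition dominates cluster sampling: if `x` belongs to
ring `ring j` of the decomposition of the cluster of center `c` (rings with
larger index contain points at least as far from the centers `C`, and
`|ring j| ≤ 1 + ∑_{j < j' ≤ ℓ} |ring j'|`), then the uniform probability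
`1/|ring j|` within its ring is at least `d(x,C)^z / ∑_{y∈X} d(y,C)^z`. -/
theorem stmt_11 {X : Type*} [MetricSpace X] [Fintype X]
    (C : Finset X) (c : X) (hcC : c ∈ C) (z : ℕ) (hz : 1 ≤ z)
    (ring : ℕ → Finset X) (ℓ j : ℕ) (hj : 1 ≤ j) (hjℓ : j ≤ ℓ)
    (hdisj : ∀ j1 j2, j ≤ j1 → j1 < j2 → j2 ≤ ℓ → Disjoint (ring j1) (ring j2))
    (x : X) (hx : x ∈ ring j)
    (horder : ∀ j', j < j' → j' ≤ ℓ → ∀ y ∈ ring j', dSet x C ≤ dSet y C)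
    (hcard : ((ring j).card : ℝ) ≤ 1 + ∑ j' ∈ Finset.Ioc j ℓ, ((ring j').card : ℝ)) :
    dSet x C ^ z / ∑ y : X, dSet y C ^ z ≤ 1 / ((ring j).card : ℝ) := by
  classical
  set D : ℝ := dSet x C ^ z with hD
  set T : ℝ := ∑ y : X, dSet y C ^ z with hT
  have hDnn : 0 ≤ D := pow_nonneg (dSet_nonneg x C) z
  have hterm : ∀ y : X, 0 ≤ dSet y C ^ z := fun y => pow_nonneg (dSet_nonneg y C) z
  have hcardpos : (0:ℝ) < ((ring j).card : ℝ) := by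
    exact_mod_cast Finset.card_pos.mpr ⟨x, hx⟩
  -- the big union of later rings
  set B : Finset X := (Finset.Ioc j ℓ).biUnion ring with hB
  have hxB : x ∉ B := by
    intro hxB
    rw [hB, Finset.mem_biUnion] at hxB
    obtain ⟨j', hj', hxj'⟩ := hxB
    rw [Finset.mem_Ioc] at hj'
    simpa using (hdisj j j' le_rfl hj'.1 hj'.2).le_bot (Finset.mem_inter.mpr ⟨hx, hxj'⟩)
  have hpd : (↑(Finset.Ioc j ℓ) : Set ℕ).PairwiseDisjoint ring := by
    intro a ha b hb hab
    simp only [Finset.coe_Ioc, Set.mem_Ioc] at ha hb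
    rcases lt_or_gt_of_ne hab with h | h
    · exact hdisj a b (le_of_lt ha.1) h hb.2
    · exact (hdisj b a (le_of_lt hb.1) h ha.2).symm
  have hsumB : ∑ j' ∈ Finset.Ioc j ℓ, ((ring j').card : ℝ) * D ≤
      ∑ y ∈ B, dSet y C ^ z := by
    rw [hB, Finset.sum_biUnion hpd]
    apply Finset.sum_le_sum
    intro j' hj'
    rw [Finset.mem_Ioc] at hj'
    calc ((ring j').card : ℝ) * D = ∑ _y ∈ ring j', D := by
          rw [Finset.sum_const, nsmul_eq_mul]
      _ ≤ ∑ y ∈ ring j', dSet y C ^ z := by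
          apply Finset.sum_le_sum
          intro y hy
          exact pow_le_pow_left₀ (dSet_nonneg x C) (horder j' hj'.1 hj'.2 y hy) z
  have hkey : ((ring j).card : ℝ) * D ≤ T := by
    calc ((ring j).card : ℝ) * D ≤ (1 + ∑ j' ∈ Finset.Ioc j ℓ, ((ring j').card : ℝ)) * D :=
          mul_le_mul_of_nonneg_right hcard hDnn
      _ = D + ∑ j' ∈ Finset.Ioc j ℓ, ((ring j').card : ℝ) * D := by
          rw [add_mul, one_mul, Finset.sum_mul]
      _ ≤ D + ∑ y ∈ B, dSet y C ^ z := by linarith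
      _ = ∑ y ∈ insert x B, dSet y C ^ z := by rw [Finset.sum_insert hxB]
      _ ≤ T := Finset.sum_le_sum_of_subset_of_nonneg (Finset.subset_univ _)
          (fun y _ _ => hterm y)
  rcases eq_or_lt_of_le (Finset.sum_nonneg fun y _ => hterm y : (0:ℝ) ≤ T) with hT0 | hT0
  · have hTeq : T = 0 := hT0.symm
    have hD0 : D = 0 := by nlinarith
    rw [hD0, zero_div]
    positivity
  · rw [div_le_div_iff₀ hT0 hcardpos, one_mul]
    linarith [hkey]
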